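/- The quadric hypersurface Y ⊂ P^4 defined by t_0 t_3 − t_1 t_2 = 0 is the Zariski closure of the image of the rational map ζ: (P^1)^3 ⇢ P^4 sending ((x_0:x_1),(y_0:y_1),(z_0:z_1)) to (x_0 y_0 z_1 : x_1 y_0 z_1 : x_0 y_1 z_1 : x_1 y_1 z_1 : (x_0 y_1 − x_1 y_0) z_0), and ζ is birational onto Y. -/

import Mathlib

noncomputable section
open MvPolynomial

/-- The trigraded ring R = ℂ[x₀,x₁,y₀,y₁,z₀,z₁]. -/
abbrev R : Type := MvPolynomial (Fin 6) ℂ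

/-- Weights giving the ℤ³-trigrading of R. -/
def triWeight : Fin 6 → Fin 3 → ℕ :=
  ![![1,0,0], ![1,0,0], ![0,1,0], ![0,1,0], ![0,0,1], ![0,0,1]]

def x0 : R := X 0
def x1 : R := X 1
def y0 : R := X 2
def y1 : R := X 3
def z0 : R := X 4
def z1 : R := X 5

/-!
STATEMENT 16: The quadric hypersurface Y ⊂ ℙ⁴ defined by t₀t₃ − t₁t₂ = 0 is the
Zariski closure of the image of ζ : (ℙ¹)³ ⇢ ℙ⁴,
((x₀:x₁),(y₀:y₁),(z₀:z₁)) ↦ (x₀y₀z₁ : x₁y₀z₁ : x₀y₁z₁ : x₁y₁z₁ : (x₀y₁−x₁y₀)z₀),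
and ζ is birational onto Y.

The closure claim is encoded by: the homogeneous ideal of the closure of the
image, i.e. the kernel of tᵢ ↦ ζᵢ, equals (t₀t₃ − t₁t₂).  Birationality onto Y
is encoded by the existence of a rational inverse: pairs of homogeneous forms
A, B, C' in t₀,…,t₄ and nonzero s, t, u ∈ R with A₀(ζ) = x₀s, A₁(ζ) = x₁s, etc.
-/

/-- The entries of ζ. -/
def ζ : Fin 5 → R :=
  ![x0 * y0 * z1, x1 * y0 * z1, x0 * y1 * z1, x1 * y1 * z1, (x0 * y1 - x1 * y0) * z0]

lemma primeX {n : ℕ} (i : Fin (n+1)) : Prime (X i : MvPolynomial (Fin (n+1)) ℂ) := by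
  set e := (renameEquiv ℂ (Equiv.swap i 0)).trans (finSuccEquiv ℂ n) with he
  rw [← MulEquiv.prime_iff e.toMulEquiv]
  have h : e.toMulEquiv (X i) = Polynomial.X := by
    show e (X i) = Polynomial.X
    rw [he]
    simp [renameEquiv_apply, rename_X, Equiv.swap_apply_left, finSuccEquiv_X_zero]
  rw [h]
  exact Polynomial.prime_X

abbrev T5 := MvPolynomial (Fin 5) ℂ
abbrev T4 := MvPolynomial (Fin 4) ℂ
def q : T5 := X 0 * X 3 - X 1 * X 2

lemma X_ne_X {n : ℕ} {i j : Fin n} (h : i ≠ j) : (X i : MvPolynomial (Fin n) ℂ) ≠ X j := by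
  intro hh
  exact h ((X_dvd_X (R := ℂ)).mp (dvd_of_eq hh))

-- irreducibility of C a * X - C b with a prime, a ∤ b-ish specialized
lemma irred_lin : Irreducible (Polynomial.C (X 2 : T4) * Polynomial.X
    - Polynomial.C (X 0 * X 1 : T4)) := by
  set a : T4 := X 2
  set b : T4 := X 0 * X 1
  have ha : a ≠ 0 := X_ne_zero _
  have hnd : (Polynomial.C a * Polynomial.X - Polynomial.C b).natDegree = 1 := by
    rw [sub_eq_add_neg, ← Polynomial.C_neg]
    exact Polynomial.natDegree_linear ha
  have hne : (Polynomial.C a * Polynomial.X - Polynomial.C b) ≠ 0 := by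
    intro h; rw [h] at hnd; simp at hnd
  have key : ∀ f g : Polynomial T4,
      Polynomial.C a * Polynomial.X - Polynomial.C b = f * g →
      f.natDegree = 0 → IsUnit f := by
    intro f g hfg hf0
    obtain ⟨c, rfl⟩ : ∃ c, f = Polynomial.C c :=
      ⟨f.coeff 0, Polynomial.eq_C_of_natDegree_eq_zero hf0⟩
    rw [Polynomial.isUnit_C]
    have hca : c ∣ a := by
      have : a = c * g.coeff 1 := by
        have := congrArg (fun p => Polynomial.coeff p 1) hfg
        simpa using this
      exact ⟨_, this⟩
    have hcb : c ∣ b := by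
      have : -b = c * g.coeff 0 := by
        have := congrArg (fun p => Polynomial.coeff p 0) hfg
        simpa using this
      exact (dvd_neg.mp ⟨_, this⟩)
    obtain ⟨d, hd⟩ := hca
    rcases (primeX (2 : Fin 4)).irreducible.isUnit_or_isUnit hd with h | h
    · exact h
    · exfalso
      have hXc : a ∣ c := by
        obtain ⟨e, he, hde⟩ := isUnit_iff_exists.mp h
        exact ⟨e, by rw [hd, mul_assoc, he, mul_one]⟩
      have : a ∣ b := hXc.trans hcb
      rcases (primeX (2 : Fin 4)).2.2 _ _ this with h2 | h2
      · exact (by decide : (2 : Fin 4) ≠ 0) ((X_dvd_X (R := ℂ)).mp h2)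
      · exact (by decide : (2 : Fin 4) ≠ 1) ((X_dvd_X (R := ℂ)).mp h2)
  constructor
  · intro h
    obtain ⟨r, hr, hrc⟩ := Polynomial.isUnit_iff.mp h
    have := congrArg (fun p => Polynomial.coeff p 1) hrc
    simp at this
    exact ha this.symm
  · intro f g hfg
    have hf : f ≠ 0 := by rintro rfl; simp at hfg; exact hne hfg
    have hg : g ≠ 0 := by rintro rfl; simp at hfg; exact hne hfg
    have : f.natDegree + g.natDegree = 1 := by
      rw [← Polynomial.natDegree_mul hf hg, ← hfg, hnd]
    rcases Nat.add_eq_one_iff.mp this with ⟨h1, h2⟩ | ⟨h1, h2⟩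
    · exact Or.inl (key f g hfg h1)
    · exact Or.inr (key g f (by rw [hfg, mul_comm]) h2)

lemma prime_q : Prime q := by
  rw [← UniqueFactorizationMonoid.irreducible_iff_prime]
  set e := finSuccEquiv ℂ 4 with he
  rw [← MulEquiv.irreducible_iff e.toMulEquiv]
  have h : e.toMulEquiv q = Polynomial.C (X 2 : T4) * Polynomial.X
      - Polynomial.C (X 0 * X 1 : T4) := by
    show e q = _
    have h3 : (3 : Fin 5) = Fin.succ 2 := rfl
    have h1 : (1 : Fin 5) = Fin.succ 0 := rfl
    have h2 : (2 : Fin 5) = Fin.succ 1 := rfl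
    rw [he, q, map_sub, map_mul, map_mul, h3, h1, h2, finSuccEquiv_X_zero,
      finSuccEquiv_X_succ, finSuccEquiv_X_succ, finSuccEquiv_X_succ, ← Polynomial.C_mul]
    ring
  rw [h]
  exact irred_lin

def ι : Fin 4 → T5 := ![X 0, X 1, X 2, X 4]

lemma elim_lemma (p : T5) : ∃ (N : ℕ) (f : T5) (P : T4),
    (X 0) ^ N * p = q * f + aeval ι P := by
  induction p using MvPolynomial.induction_on with
  | C a => exact ⟨0, 0, C a, by simp⟩
  | add p₁ p₂ h₁ h₂ =>
    obtain ⟨N₁, f₁, P₁, e₁⟩ := h₁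
    obtain ⟨N₂, f₂, P₂, e₂⟩ := h₂
    refine ⟨N₁ + N₂, X 0 ^ N₂ * f₁ + X 0 ^ N₁ * f₂,
      (X 0 : T4) ^ N₂ * P₁ + (X 0 : T4) ^ N₁ * P₂, ?_⟩
    have hι : aeval ι ((X 0 : T4) ^ N₂ * P₁ + (X 0 : T4) ^ N₁ * P₂)
        = X 0 ^ N₂ * aeval ι P₁ + X 0 ^ N₁ * aeval ι P₂ := by
      simp [ι]
    rw [hι, pow_add]
    linear_combination (X 0 : T5) ^ N₂ * e₁ + (X 0 : T5) ^ N₁ * e₂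
  | mul_X p i h =>
    obtain ⟨N, f, P, e⟩ := h
    fin_cases i
    · refine ⟨N, f * X 0, P * X 0, ?_⟩
      rw [map_mul]
      show X 0 ^ N * (p * X 0) = q * (f * X 0) + aeval ι P * aeval ι (X 0)
      have : aeval ι (X 0 : T4) = X 0 := by simp [ι]
      rw [this]
      linear_combination (X 0 : T5) * e
    · refine ⟨N, f * X 1, P * X 1, ?_⟩
      rw [map_mul]
      show X 0 ^ N * (p * X 1) = q * (f * X 1) + aeval ι P * aeval ι (X 1)
      have : aeval ι (X 1 : T4) = X 1 := by simp [ι]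
      rw [this]
      linear_combination (X 1 : T5) * e
    · refine ⟨N, f * X 2, P * X 2, ?_⟩
      rw [map_mul]
      show X 0 ^ N * (p * X 2) = q * (f * X 2) + aeval ι P * aeval ι (X 2)
      have : aeval ι (X 2 : T4) = X 2 := by simp [ι]
      rw [this]
      linear_combination (X 2 : T5) * e
    · refine ⟨N + 1, f * (X 0 * X 3) + aeval ι P, P * (X 1 * X 2), ?_⟩
      rw [map_mul, map_mul]
      show X 0 ^ (N + 1) * (p * X 3)
        = q * (f * (X 0 * X 3) + aeval ι P) + aeval ι P * (aeval ι (X 1) * aeval ι (X 2))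
      have h1 : aeval ι (X 1 : T4) = X 1 := by simp [ι]
      have h2 : aeval ι (X 2 : T4) = X 2 := by simp [ι]
      rw [h1, h2]
      have hq : q = X 0 * X 3 - X 1 * X 2 := rfl
      linear_combination (X 0 * X 3 : T5) * e - aeval ι P * hq
    · refine ⟨N, f * X 4, P * X 3, ?_⟩
      rw [map_mul]
      show X 0 ^ N * (p * X 4) = q * (f * X 4) + aeval ι P * aeval ι (X 3)
      have : aeval ι (X 3 : T4) = X 4 := by simp [ι]
      rw [this]
      linear_combination (X 4 : T5) * e

abbrev FF := FractionRing T4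

set_option maxHeartbeats 1000000 in
set_option synthInstance.maxHeartbeats 200000 in
lemma indep (P : T4) (h : aeval ζ (aeval ι P) = 0) : P = 0 := by
  have hα : Function.Injective (algebraMap T4 FF) := IsFractionRing.injective T4 FF
  have h0 : algebraMap T4 FF (X 0) ≠ 0 := by
    intro hh
    exact X_ne_zero 0 (hα (by rw [hh, map_zero]))
  have h21 : algebraMap T4 FF (X 2) - algebraMap T4 FF (X 1) ≠ 0 := by
    intro hh
    rw [← map_sub, ← map_zero (algebraMap T4 FF)] at hh
    exact sub_ne_zero_of_ne (X_ne_X (by decide : (2 : Fin 4) ≠ 1)) (hα hh)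
  set v : Fin 6 → FF := ![algebraMap T4 FF (X 0), algebraMap T4 FF (X 1), 1,
    algebraMap T4 FF (X 2) / algebraMap T4 FF (X 0),
    algebraMap T4 FF (X 3) / (algebraMap T4 FF (X 2) - algebraMap T4 FF (X 1)), 1] with hv
  have hv0 : v 0 = algebraMap T4 FF (X 0) := rfl
  have hv1 : v 1 = algebraMap T4 FF (X 1) := rfl
  have hv2 : v 2 = 1 := rfl
  have hv3 : v 3 = algebraMap T4 FF (X 2) / algebraMap T4 FF (X 0) := rfl
  have hv4 : v 4 = algebraMap T4 FF (X 3) / (algebraMap T4 FF (X 2) - algebraMap T4 FF (X 1)) :=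
    rfl
  have hv5 : v 5 = 1 := rfl
  have key : (aeval v).comp ((aeval ζ).comp (aeval ι)) = IsScalarTower.toAlgHom ℂ T4 FF := by
    apply algHom_ext
    have c0 : (aeval v).comp ((aeval ζ).comp (aeval ι)) (X (0 : Fin 4))
        = algebraMap T4 FF (X 0) := by
      simp only [AlgHom.comp_apply, aeval_X]
      rw [show ι 0 = X 0 from rfl, aeval_X, show ζ 0 = x0 * y0 * z1 from rfl]
      simp only [x0, y0, z1, map_mul, aeval_X, hv0, hv2, hv5]
      ring
    have c1 : (aeval v).comp ((aeval ζ).comp (aeval ι)) (X (1 : Fin 4))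
        = algebraMap T4 FF (X 1) := by
      simp only [AlgHom.comp_apply, aeval_X]
      rw [show ι 1 = X 1 from rfl, aeval_X, show ζ 1 = x1 * y0 * z1 from rfl]
      simp only [x1, y0, z1, map_mul, aeval_X, hv1, hv2, hv5]
      ring
    have c2 : (aeval v).comp ((aeval ζ).comp (aeval ι)) (X (2 : Fin 4))
        = algebraMap T4 FF (X 2) := by
      simp only [AlgHom.comp_apply, aeval_X]
      rw [show ι 2 = X 2 from rfl, aeval_X, show ζ 2 = x0 * y1 * z1 from rfl]
      simp only [x0, y1, z1, map_mul, aeval_X, hv0, hv3, hv5]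
      field_simp
    have c3 : (aeval v).comp ((aeval ζ).comp (aeval ι)) (X (3 : Fin 4))
        = algebraMap T4 FF (X 3) := by
      simp only [AlgHom.comp_apply, aeval_X]
      rw [show ι 3 = X 4 from rfl, aeval_X,
        show ζ 4 = (x0 * y1 - x1 * y0) * z0 from rfl]
      simp only [x0, x1, y0, y1, z0, map_mul, map_sub, aeval_X, hv0, hv1, hv2, hv3, hv4]
      rw [mul_one, mul_div_cancel₀ _ h0, mul_comm, div_mul_cancel₀ _ h21]
    intro j
    fin_cases j
    · exact c0
    · exact c1
    · exact c2
    · exact c3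
  have hk := DFunLike.congr_fun key P
  simp only [AlgHom.comp_apply, h, map_zero, IsScalarTower.coe_toAlgHom'] at hk
  exact hα (by rw [← hk, map_zero])

lemma hqζ : aeval ζ q = 0 := by
  rw [q, map_sub, map_mul, map_mul, aeval_X, aeval_X, aeval_X, aeval_X]
  show x0 * y0 * z1 * (x1 * y1 * z1) - x1 * y0 * z1 * (x0 * y1 * z1) = 0
  ring

lemma hprime_q : (Ideal.span {(q : T5)}).IsPrime :=
  (Ideal.span_singleton_prime prime_q.ne_zero).mpr prime_q

lemma hX0_not_mem : (X 0 : T5) ∉ Ideal.span {q} := by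
  rw [Ideal.mem_span_singleton]
  rintro ⟨h, hh⟩
  have := congrArg (eval (fun i => if i = 0 then (1 : ℂ) else 0)) hh
  simp [q] at this

lemma pow_X0_cancel : ∀ (N : ℕ) (p : T5),
    (X 0) ^ N * p ∈ Ideal.span {q} → p ∈ Ideal.span {q} := by
  intro N
  induction N with
  | zero => intro p h; simpa using h
  | succ n ih =>
    intro p h
    have hh : (X 0 : T5) * ((X 0) ^ n * p) ∈ Ideal.span {q} := by
      rw [← mul_assoc, ← pow_succ']
      exact h
    rcases hprime_q.mem_or_mem hh with h1 | h1
    · exact absurd h1 hX0_not_mem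
    · exact ih p h1

lemma uval_ne : (x0 * y1 - x1 * y0 : R) ≠ 0 := by
  intro h
  have := congrArg (eval (fun i : Fin 6 => if i = 0 then (1 : ℂ) else if i = 3 then 1 else 0)) h
  simp [x0, x1, y0, y1] at this

theorem quadric_closure_of_zeta :
    RingHom.ker (MvPolynomial.aeval ζ : MvPolynomial (Fin 5) ℂ →ₐ[ℂ] R).toRingHom =
      Ideal.span {(X 0 : MvPolynomial (Fin 5) ℂ) * X 3 - X 1 * X 2} ∧
    ∃ (A B C' : Fin 2 → MvPolynomial (Fin 5) ℂ) (dA dB dC : ℕ),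
      (∀ k, (A k).IsHomogeneous dA) ∧ (∀ k, (B k).IsHomogeneous dB) ∧
      (∀ k, (C' k).IsHomogeneous dC) ∧
      ∃ s t u : R, s ≠ 0 ∧ t ≠ 0 ∧ u ≠ 0 ∧
        aeval ζ (A 0) = x0 * s ∧ aeval ζ (A 1) = x1 * s ∧
        aeval ζ (B 0) = y0 * t ∧ aeval ζ (B 1) = y1 * t ∧
        aeval ζ (C' 0) = z0 * u ∧ aeval ζ (C' 1) = z1 * u := by
  constructor
  · apply le_antisymm
    · intro p hp
      have hp' : aeval ζ p = 0 := hp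
      obtain ⟨N, f, P, hNfP⟩ := elim_lemma p
      have hP : aeval ζ (aeval ι P) = 0 := by
        have hc := congrArg (aeval ζ) hNfP
        rw [map_mul, map_pow, map_add, map_mul, hqζ, hp'] at hc
        simpa using hc.symm
      rw [indep P hP, map_zero, add_zero] at hNfP
      show p ∈ Ideal.span {q}
      exact pow_X0_cancel N p (Ideal.mem_span_singleton.mpr ⟨f, hNfP⟩)
    · rw [Ideal.span_le, Set.singleton_subset_iff]
      show ((X 0 : T5) * X 3 - X 1 * X 2) ∈ RingHom.ker _
      rw [RingHom.mem_ker]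
      exact hqζ
  · refine ⟨![X 0, X 1], ![X 0, X 2], ![X 4, X 2 - X 1], 1, 1, 1, ?_, ?_, ?_,
      y0 * z1, x0 * z1, x0 * y1 - x1 * y0, ?_, ?_, ?_, ?_, ?_, ?_, ?_, ?_, ?_⟩
    · intro k; fin_cases k
      · exact isHomogeneous_X _ _
      · exact isHomogeneous_X _ _
    · intro k; fin_cases k
      · exact isHomogeneous_X _ _
      · exact isHomogeneous_X _ _
    · intro k; fin_cases k
      · exact isHomogeneous_X _ _
      · exact (isHomogeneous_X _ _).sub (isHomogeneous_X _ _)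
    · exact mul_ne_zero (X_ne_zero _) (X_ne_zero _)
    · exact mul_ne_zero (X_ne_zero _) (X_ne_zero _)
    · exact uval_ne
    · show aeval ζ (X 0) = _
      rw [aeval_X]
      show x0 * y0 * z1 = x0 * (y0 * z1)
      ring
    · show aeval ζ (X 1) = _
      rw [aeval_X]
      show x1 * y0 * z1 = x1 * (y0 * z1)
      ring
    · show aeval ζ (X 0) = _
      rw [aeval_X]
      show x0 * y0 * z1 = y0 * (x0 * z1)
      ring
    · show aeval ζ (X 2) = _
      rw [aeval_X]
      show x0 * y1 * z1 = y1 * (x0 * z1)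
      ring
    · show aeval ζ (X 4) = _
      rw [aeval_X]
      show (x0 * y1 - x1 * y0) * z0 = z0 * (x0 * y1 - x1 * y0)
      ring
    · show aeval ζ (X 2 - X 1) = _
      rw [map_sub, aeval_X, aeval_X]
      show x0 * y1 * z1 - x1 * y0 * z1 = z1 * (x0 * y1 - x1 * y0)
      ring
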